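/- arXiv:2510.25458 — 5 statements merged into one kernel-verified Lean document; each statement's English description precedes it below -/
import Mathlib

section
/- For any utility function u mapping into [-1,1], any threshold t0 in [-1,1], and any monotone nondecreasing function h from [-1,1] to [-1,1], the utility risk of the direct decision rule exceeds the utility risk of the post-processed rule by at most twice the utility calibration error: R_util(v_u; t0) - R_util(h ∘ v_u; t0) ≤ 2·UC(f,u). -/
/-!
The two decision rules disagree only where `v ∈ C = {z | t ≤ z, h z < t}` or
`v ∈ D = {z | z < t, t ≤ h z}`. On `C` the excess loss of the direct rule is `t - u ≤ v - u`, on `D`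
it is `u - t ≤ u - v`, so the excess risk is at most `-∫_{v ∈ C} (u - v) + ∫_{v ∈ D} (u - v)`.
Since `h` is monotone, `C` and `D` are intervals; by inner regularity of the law of `v`, the
integral over an interval is a limit of integrals over closed subintervals, each bounded by the
calibration error.
-/

open MeasureTheory Set Filter
open scoped ENNReal Topology

theorem exists_Icc_measure_sdiff_lt {ρ : Measure ℝ} [IsFiniteMeasure ρ]
    {S : Set ℝ} (hSm : MeasurableSet S) (hne : S.Nonempty) {ε : ℝ≥0∞} (hε : ε ≠ 0) :
    ∃ a ∈ S, ∃ b ∈ S, a ≤ b ∧ ρ (S \ Icc a b) < ε := by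
  obtain ⟨K, hKS, hK, hlt⟩ := hSm.exists_isCompact_sdiff_lt (measure_ne_top ρ S) hε
  rcases K.eq_empty_or_nonempty with rfl | hKne
  · obtain ⟨a, ha⟩ := hne
    exact ⟨a, ha, a, ha, le_rfl, (measure_mono sdiff_subset).trans_lt (by simpa using hlt)⟩
  · refine ⟨sInf K, hKS (hK.sInf_mem hKne), sSup K, hKS (hK.sSup_mem hKne),
      csInf_le_csSup hKne hK.bddBelow hK.bddAbove, (measure_mono ?_).trans_lt hlt⟩
    exact sdiff_subset_sdiff_right fun x hx => ⟨csInf_le hK.bddBelow hx, le_csSup hK.bddAbove hx⟩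

theorem threshold_regret_le (h : ℝ → ℝ) {K : Set ℝ} {t u z : ℝ} (hz : z ∈ K) :
    (t - u) * ((if t ≤ z then (1 : ℝ) else 0) - (if t ≤ h z then (1 : ℝ) else 0)) ≤
      (z - u) * (Ici t ∩ h ⁻¹' Iio t ∩ K).indicator (fun _ => 1) z +
        (u - z) * (Iio t ∩ h ⁻¹' Ici t ∩ K).indicator (fun _ => 1) z := by
  simp only [indicator, mem_inter_iff, mem_Ici, mem_Iio, mem_preimage, hz, and_true]
  split_ifs <;> grind

section

variable {Ω : Type*} [MeasurableSpace Ω] {μ : Measure Ω}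

theorem integral_mul_indicator_comp {g v : Ω → ℝ} (hv : Measurable v) {S : Set ℝ}
    (hS : MeasurableSet S) :
    ∫ ω, g ω * S.indicator (fun _ => 1) (v ω) ∂μ = ∫ ω in v ⁻¹' S, g ω ∂μ := by
  rw [← integral_indicator (hv hS)]
  congr 1 with ω
  by_cases h : v ω ∈ S <;> simp [h]

theorem abs_integral_mul_indicator_le_of_ordConnected [IsFiniteMeasure μ] {g v : Ω → ℝ}
    (hg : Integrable g μ) (hv : Measurable v) {S : Set ℝ} (hS : S.OrdConnected)
    (hSm : MeasurableSet S) {M : ℝ} (hM0 : 0 ≤ M)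
    (hM : ∀ a ∈ S, ∀ b ∈ S, a ≤ b → |∫ ω, g ω * (Icc a b).indicator (fun _ => 1) (v ω) ∂μ| ≤ M) :
    |∫ ω, g ω * S.indicator (fun _ => 1) (v ω) ∂μ| ≤ M := by
  rcases S.eq_empty_or_nonempty with rfl | hne
  · simpa using hM0
  have hexists (n : ℕ) : ∃ a ∈ S, ∃ b ∈ S, a ≤ b ∧ μ.map v (S \ Icc a b) < (n : ℝ≥0∞)⁻¹ :=
    exists_Icc_measure_sdiff_lt hSm hne (ENNReal.inv_ne_zero.2 (ENNReal.natCast_ne_top n))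
  choose a ha b hb hab hsmall using hexists
  have htail : Tendsto (fun n => ∫ ω in v ⁻¹' S \ v ⁻¹' Icc (a n) (b n), g ω ∂μ) atTop (𝓝 0) := by
    refine hg.tendsto_setIntegral_nhds_zero (tendsto_of_tendsto_of_tendsto_of_le_of_le
      tendsto_const_nhds ENNReal.tendsto_inv_nat_nhds_zero (fun _ => zero_le) fun n => ?_)
    rw [Function.comp_apply, ← preimage_sdiff, ← Measure.map_apply hv (hSm.diff measurableSet_Icc)]
    exact (hsmall n).le
  have hIcc : Tendsto (fun n => ∫ ω in v ⁻¹' Icc (a n) (b n), g ω ∂μ) atTop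
      (𝓝 (∫ ω in v ⁻¹' S, g ω ∂μ)) := by
    have hsub (n : ℕ) : v ⁻¹' Icc (a n) (b n) ⊆ v ⁻¹' S := preimage_mono (hS.out (ha n) (hb n))
    simpa [setIntegral_sdiff (hv measurableSet_Icc) hg.integrableOn (hsub _)] using
      (tendsto_const_nhds (x := ∫ ω in v ⁻¹' S, g ω ∂μ)).sub htail
  rw [integral_mul_indicator_comp hv hSm]
  refine le_of_tendsto' hIcc.abs fun n => ?_
  rw [← integral_mul_indicator_comp hv measurableSet_Icc]
  exact hM _ (ha n) _ (hb n) (hab n)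

theorem integrable_mul_ite_sub_ite {f w₁ w₂ : Ω → ℝ} (hf : Integrable f μ) (h₁ : Measurable w₁)
    (h₂ : Measurable w₂) (t : ℝ) :
    Integrable (fun ω => f ω * ((if t ≤ w₁ ω then (1 : ℝ) else 0) -
      (if t ≤ w₂ ω then (1 : ℝ) else 0))) μ := by
  refine hf.mul_bdd (c := 1) ?_ (ae_of_all _ fun ω => ?_)
  · exact ((Measurable.ite (measurableSet_le measurable_const h₁) measurable_const
      measurable_const).sub (Measurable.ite (measurableSet_le measurable_const h₂)
      measurable_const measurable_const)).aestronglyMeasurable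
  · split_ifs <;> norm_num

theorem integrable_mul_indicator_comp {g v : Ω → ℝ} (hg : Integrable g μ) (hv : Measurable v)
    {S : Set ℝ} (hS : MeasurableSet S) :
    Integrable (fun ω => g ω * S.indicator (fun _ => (1 : ℝ)) (v ω)) μ :=
  hg.mul_bdd (c := 1) ((measurable_const.indicator hS).comp hv).aestronglyMeasurable
    (ae_of_all _ fun ω => by simpa using norm_indicator_le_norm_self (fun _ => (1 : ℝ)) (v ω))

theorem abs_integral_mul_indicator_le_iSup_Icc [IsFiniteMeasure μ] {g v : Ω → ℝ}
    (hg : Integrable g μ) {C : ℝ} (hgC : ∀ ω, |g ω| ≤ C) (hv : Measurable v) {S : Set ℝ}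
    (hS : S.OrdConnected) (hSm : MeasurableSet S) (hS₁ : S ⊆ Icc (-1) 1) :
    |∫ ω, g ω * S.indicator (fun _ => 1) (v ω) ∂μ| ≤
      ⨆ I : {q : ℝ × ℝ // -1 ≤ q.1 ∧ q.1 ≤ q.2 ∧ q.2 ≤ 1},
        |∫ ω, g ω * (Icc I.1.1 I.1.2).indicator (fun _ => (1 : ℝ)) (v ω) ∂μ| := by
  have hbdd : BddAbove (range fun I : {q : ℝ × ℝ // -1 ≤ q.1 ∧ q.1 ≤ q.2 ∧ q.2 ≤ 1} =>
      |∫ ω, g ω * (Icc I.1.1 I.1.2).indicator (fun _ => (1 : ℝ)) (v ω) ∂μ|) := by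
    refine ⟨C * μ.real univ, forall_mem_range.2 fun I => ?_⟩
    rw [← Real.norm_eq_abs]
    refine norm_integral_le_of_norm_le_const (ae_of_all _ fun ω => ?_)
    rw [norm_mul, Real.norm_eq_abs]
    refine (mul_le_of_le_one_right (abs_nonneg _) ?_).trans (hgC ω)
    simpa using norm_indicator_le_norm_self (fun _ => (1 : ℝ)) (v ω)
  have hIcc {a b : ℝ} (ha : -1 ≤ a) (hab : a ≤ b) (hb : b ≤ 1) :=
    le_ciSup hbdd ⟨(a, b), ha, hab, hb⟩
  exact abs_integral_mul_indicator_le_of_ordConnected hg hv hS hSm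
    ((abs_nonneg _).trans (hIcc (by norm_num) le_rfl zero_le_one))
    fun a ha b hb hab => hIcc (hS₁ ha).1 hab (hS₁ hb).2

theorem integral_threshold_sub_integral_threshold_comp_le [IsFiniteMeasure μ] {u v : Ω → ℝ}
    (hu : Integrable u μ) (hv : Integrable v μ) (hmu : Measurable u) (hmv : Measurable v) {K : Set ℝ}
    (hK : MeasurableSet K) (hvK : ∀ ω, v ω ∈ K) {h : ℝ → ℝ} (hh : Measurable h) (t : ℝ) :
    (∫ ω, (t - u ω) * ((if t ≤ v ω then (1 : ℝ) else 0) - (if t ≤ u ω then (1 : ℝ) else 0)) ∂μ)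
      - (∫ ω, (t - u ω) * ((if t ≤ h (v ω) then (1 : ℝ) else 0) -
        (if t ≤ u ω then (1 : ℝ) else 0)) ∂μ)
      ≤ -∫ ω, (u ω - v ω) * (Ici t ∩ h ⁻¹' Iio t ∩ K).indicator (fun _ => 1) (v ω) ∂μ +
          ∫ ω, (u ω - v ω) * (Iio t ∩ h ⁻¹' Ici t ∩ K).indicator (fun _ => 1) (v ω) ∂μ := by
  have hti : Integrable (fun ω => t - u ω) μ := (integrable_const t).sub hu
  have hgi : Integrable (fun ω => u ω - v ω) μ := hu.sub hv
  have hCi := integrable_mul_indicator_comp hgi hmv (S := Ici t ∩ h ⁻¹' Iio t ∩ K)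
    ((measurableSet_Ici.inter (hh measurableSet_Iio)).inter hK)
  have hDi := integrable_mul_indicator_comp hgi hmv (S := Iio t ∩ h ⁻¹' Ici t ∩ K)
    ((measurableSet_Iio.inter (hh measurableSet_Ici)).inter hK)
  have hdirect := integrable_mul_ite_sub_ite hti hmv hmu t
  have hpost := integrable_mul_ite_sub_ite (w₁ := fun ω => h (v ω)) hti (hh.comp hmv) hmu t
  rw [← integral_neg, ← integral_add hCi.fun_neg hDi, ← integral_sub hdirect hpost]
  refine integral_mono (hdirect.sub hpost) (hCi.fun_neg.add hDi) fun ω => ?_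
  have := threshold_regret_le h (t := t) (u := u ω) (hvK ω)
  linarith

end

theorem stmt_0_general {Ω : Type*} [MeasurableSpace Ω] (μ : Measure Ω) [IsProbabilityMeasure μ]
    (uY v : Ω → ℝ)
    (huY : ∀ ω, uY ω ∈ Icc (-1 : ℝ) 1) (hv : ∀ ω, v ω ∈ Icc (-1 : ℝ) 1)
    (hmuY : Measurable uY) (hmv : Measurable v)
    (UC : ℝ)
    (hUC : UC = ⨆ I : {q : ℝ × ℝ // -1 ≤ q.1 ∧ q.1 ≤ q.2 ∧ q.2 ≤ 1},
      |∫ ω, (uY ω - v ω) * (Icc I.1.1 I.1.2).indicator (fun _ => (1 : ℝ)) (v ω) ∂μ|)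
    (t0 : ℝ)
    (h : ℝ → ℝ) (hmono : Monotone h) :
    (∫ ω, (t0 - uY ω) * ((if t0 ≤ v ω then (1 : ℝ) else 0) -
        (if t0 ≤ uY ω then (1 : ℝ) else 0)) ∂μ)
      - (∫ ω, (t0 - uY ω) * ((if t0 ≤ h (v ω) then (1 : ℝ) else 0) -
        (if t0 ≤ uY ω then (1 : ℝ) else 0)) ∂μ)
      ≤ 2 * UC := by
  have huYi : Integrable uY μ :=
    .of_bound hmuY.aestronglyMeasurable 1 (ae_of_all _ fun ω => abs_le.2 (huY ω))
  have hvi : Integrable v μ :=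
    .of_bound hmv.aestronglyMeasurable 1 (ae_of_all _ fun ω => abs_le.2 (hv ω))
  have hgC (ω : Ω) : |uY ω - v ω| ≤ 2 := by
    obtain ⟨⟨hu₁, hu₂⟩, ⟨hv₁, hv₂⟩⟩ := And.intro (huY ω) (hv ω)
    exact abs_le.2 ⟨by linarith, by linarith⟩
  have hgi : Integrable (fun ω => uY ω - v ω) μ := huYi.sub hvi
  set C := Ici t0 ∩ h ⁻¹' Iio t0 ∩ Icc (-1) 1
  set D := Iio t0 ∩ h ⁻¹' Ici t0 ∩ Icc (-1) 1
  have hC := abs_integral_mul_indicator_le_iSup_Icc hgi hgC hmv (S := C)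
    ((ordConnected_Ici.inter ((isLowerSet_Iio t0).preimage hmono).ordConnected).inter
      ordConnected_Icc)
    ((measurableSet_Ici.inter (hmono.measurable measurableSet_Iio)).inter measurableSet_Icc)
    inter_subset_right
  have hD := abs_integral_mul_indicator_le_iSup_Icc hgi hgC hmv (S := D)
    ((ordConnected_Iio.inter ((isUpperSet_Ici t0).preimage hmono).ordConnected).inter
      ordConnected_Icc)
    ((measurableSet_Iio.inter (hmono.measurable measurableSet_Ici)).inter measurableSet_Icc)
    inter_subset_right
  rw [← hUC] at hC hD
  have hrisk := integral_threshold_sub_integral_threshold_comp_le huYi hvi hmuY hmv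
    measurableSet_Icc hv hmono.measurable t0
  linarith [neg_abs_le (∫ ω, (uY ω - v ω) * C.indicator (fun _ => (1 : ℝ)) (v ω) ∂μ),
    le_abs_self (∫ ω, (uY ω - v ω) * D.indicator (fun _ => (1 : ℝ)) (v ω) ∂μ)]

/-- risk of thresholding the predicted utility minus the risk of any monotone
post-processing of it is at most twice the worst-interval utility calibration error. -/
theorem stmt_0 {Ω : Type*} [MeasurableSpace Ω] (μ : Measure Ω) [IsProbabilityMeasure μ]
    (uY v : Ω → ℝ)
    (huY : ∀ ω, uY ω ∈ Icc (-1 : ℝ) 1) (hv : ∀ ω, v ω ∈ Icc (-1 : ℝ) 1)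
    (hmuY : Measurable uY) (hmv : Measurable v)
    (UC : ℝ)
    (hUC : UC = ⨆ I : {q : ℝ × ℝ // -1 ≤ q.1 ∧ q.1 ≤ q.2 ∧ q.2 ≤ 1},
      |∫ ω, (uY ω - v ω) * (Icc I.1.1 I.1.2).indicator (fun _ => (1 : ℝ)) (v ω) ∂μ|)
    (t0 : ℝ) (ht0 : t0 ∈ Icc (-1 : ℝ) 1)
    (h : ℝ → ℝ) (hmono : Monotone h) (hrange : ∀ z ∈ Icc (-1 : ℝ) 1, h z ∈ Icc (-1 : ℝ) 1) :
    (∫ ω, (t0 - uY ω) * ((if t0 ≤ v ω then (1 : ℝ) else 0) -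
        (if t0 ≤ uY ω then (1 : ℝ) else 0)) ∂μ)
      - (∫ ω, (t0 - uY ω) * ((if t0 ≤ h (v ω) then (1 : ℝ) else 0) -
        (if t0 ≤ uY ω then (1 : ℝ) else 0)) ∂μ)
      ≤ 2 * UC :=
  stmt_0_general μ uY v huY hv hmuY hmv UC hUC t0 h hmono
end

section
/- The distance to the nearest perfectly calibrated utility predictor is bounded by 2·sqrt(2·UC(f,u)) + UC(f,u); in particular DCU(f,u) ≤ sqrt(8·UC(f,u)) + UC(f,u). -/
/-!
Bin the predictions `v` into `n` intervals of width `2 / n` and let `g` be the average of the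
realized utility `uY` over each bin. Then `g` is perfectly calibrated, because conditioning on `g`
only merges bins, on each of which `g` already has the right average. On a single bin `g` is
constant and `v` varies by at most `2 / n`, so `∫ |g - v|` over the bin is at most
`|∫ (uY - v)|` over the bin plus `2 / n` times its mass; the first term is at most `UC`, since
every bin is the preimage of an interval (a half-open one being an increasing union of closed
ones). Summing, `DCU ≤ 2 / n + n · UC`, and `n ≈ √(2 / UC)` gives `√(8 · UC) + UC`.
-/

open MeasureTheory Set Filter Topology

namespace DistanceToCalibration

section FiberAverage

variable {Ω ι : Type*} [MeasurableSpace Ω] {μ : Measure Ω} {φ : Ω → ι}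

noncomputable def fiberAverage (μ : Measure Ω) (φ : Ω → ι) (f : Ω → ℝ) (ω : Ω) : ℝ :=
  ⨍ x in φ ⁻¹' {φ ω}, f x ∂μ

lemma abs_fiberAverage_le [IsFiniteMeasure μ] {f : Ω → ℝ} {C : ℝ}
    (hf : Integrable f μ) (hC : ∀ x, |f x| ≤ C) (ω : Ω) : |fiberAverage μ φ f ω| ≤ C := by
  refine abs_le.mpr (?_ : fiberAverage μ φ f ω ∈ Icc (-C) C)
  by_cases h0 : μ (φ ⁻¹' {φ ω}) = 0
  · simp [fiberAverage, setAverage_eq, measureReal_def, h0, (abs_nonneg _).trans (hC ω)]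
  · exact (convex_Icc _ _).set_average_mem isClosed_Icc h0 (measure_ne_top _ _)
      (ae_of_all _ fun x => abs_le.mp (hC x)) hf.integrableOn

variable [MeasurableSpace ι] [MeasurableSingletonClass ι]

lemma measurable_fiberAverage [Countable ι] (hφ : Measurable φ) (f : Ω → ℝ) :
    Measurable (fiberAverage μ φ f) :=
  (measurable_of_countable fun i => ⨍ x in φ ⁻¹' {i}, f x ∂μ).comp hφ

lemma integrable_fiberAverage [IsFiniteMeasure μ] [Finite ι] (hφ : Measurable φ) (f : Ω → ℝ) :
    Integrable (fiberAverage μ φ f) μ := by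
  obtain ⟨C, hC⟩ := (finite_range fun i => |⨍ x in φ ⁻¹' {i}, f x ∂μ|).bddAbove
  exact .of_bound (measurable_fiberAverage hφ f).aestronglyMeasurable C
    (ae_of_all _ fun ω => hC (mem_range_self (φ ω)))

lemma setIntegral_fiber_fiberAverage [IsFiniteMeasure μ] (hφ : Measurable φ) (f : Ω → ℝ)
    (i : ι) : ∫ x in φ ⁻¹' {i}, fiberAverage μ φ f x ∂μ = ∫ x in φ ⁻¹' {i}, f x ∂μ := by
  rw [setIntegral_congr_fun (hφ (measurableSet_singleton i))
      (fun x (hx : φ x = i) => by rw [fiberAverage, hx]),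
    setIntegral_const, measure_smul_setAverage _ (measure_ne_top _ _)]

lemma setIntegral_preimage_eq_sum (hφ : Measurable φ) {F : Ω → ℝ} (hF : Integrable F μ)
    (s : Finset ι) : ∫ x in φ ⁻¹' s, F x ∂μ = ∑ i ∈ s, ∫ x in φ ⁻¹' {i}, F x ∂μ := by
  rw [← Finset.set_biUnion_preimage_singleton]
  exact integral_biUnion_finset s (fun i _ => hφ (measurableSet_singleton i))
    ((pairwiseDisjoint_fiber φ _).subset (subset_univ _)) (fun i _ => hF.integrableOn)

lemma integral_eq_sum_fiber [Fintype ι] (hφ : Measurable φ) {F : Ω → ℝ} (hF : Integrable F μ) :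
    ∫ x, F x ∂μ = ∑ i, ∫ x in φ ⁻¹' {i}, F x ∂μ := by
  rw [← setIntegral_preimage_eq_sum hφ hF, Finset.coe_univ, preimage_univ, setIntegral_univ]

lemma condExp_comap_fiberAverage [IsFiniteMeasure μ] [Finite ι] (hφ : Measurable φ)
    {f : Ω → ℝ} (hf : Integrable f μ) :
    μ[f | MeasurableSpace.comap (fiberAverage μ φ f) inferInstance] =ᵐ[μ] fiberAverage μ φ f := by
  have hg := measurable_fiberAverage (μ := μ) hφ f
  refine (ae_eq_condExp_of_forall_setIntegral_eq hg.comap_le hf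
    (fun _ _ _ => (integrable_fiberAverage hφ f).integrableOn) ?_
    (Measurable.of_comap_le le_rfl).aestronglyMeasurable).symm
  rintro _ ⟨t, -, rfl⟩ -
  have := Fintype.ofFinite ι
  classical
  have hpre : fiberAverage μ φ f ⁻¹' t =
      φ ⁻¹' ↑(Finset.univ.filter fun i => ⨍ x in φ ⁻¹' {i}, f x ∂μ ∈ t) := by
    ext ω; simp [fiberAverage]
  rw [hpre, setIntegral_preimage_eq_sum hφ (integrable_fiberAverage hφ f),
    setIntegral_preimage_eq_sum hφ hf]
  exact Finset.sum_congr rfl fun i _ => setIntegral_fiber_fiberAverage hφ f i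

lemma setIntegral_abs_le_abs_setIntegral_add [IsFiniteMeasure μ] {F : Ω → ℝ} {s : Set Ω}
    {a b : ℝ} (hs : MeasurableSet s) (hF : IntegrableOn F s μ) (hab : ∀ x ∈ s, F x ∈ Icc a b) :
    ∫ x in s, |F x| ∂μ ≤ |∫ x in s, F x ∂μ| + (b - a) * μ.real s := by
  -- On `s` either `F` has a constant sign, or `|F| ≤ b - a`.
  obtain ⟨σ, hσ, hbound⟩ : ∃ σ : ℝ, |σ| ≤ 1 ∧ ∀ x ∈ s, |F x| ≤ σ * F x + (b - a) := by
    rcases le_or_gt 0 a with ha | ha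
    · refine ⟨1, by simp, fun x hx => ?_⟩
      have := hab x hx
      rw [abs_of_nonneg (ha.trans this.1)]
      linarith [this.1, this.2]
    rcases le_or_gt b 0 with hb | hb
    · refine ⟨-1, by simp, fun x hx => ?_⟩
      have := hab x hx
      rw [abs_of_nonpos (this.2.trans hb)]
      linarith [this.1, this.2]
    · refine ⟨0, by simp, fun x hx => ?_⟩
      have := hab x hx
      rw [abs_le]
      constructor <;> linarith [this.1, this.2]
  calc ∫ x in s, |F x| ∂μ ≤ ∫ x in s, (σ * F x + (b - a)) ∂μ :=
        setIntegral_mono_on hF.abs ((hF.const_mul σ).add (integrable_const _)) hs hbound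
    _ = σ * ∫ x in s, F x ∂μ + (b - a) * μ.real s := by
        rw [integral_add (hF.const_mul σ) (integrable_const _), integral_const_mul,
          setIntegral_const, smul_eq_mul, mul_comm (μ.real s)]
    _ ≤ |∫ x in s, F x ∂μ| + (b - a) * μ.real s := by
        gcongr
        calc σ * ∫ x in s, F x ∂μ ≤ |σ * ∫ x in s, F x ∂μ| := le_abs_self _
          _ = |σ| * |∫ x in s, F x ∂μ| := abs_mul _ _
          _ ≤ |∫ x in s, F x ∂μ| := mul_le_of_le_one_left (abs_nonneg _) hσ

lemma integral_abs_fiberAverage_sub_le [IsFiniteMeasure μ] [Fintype ι] (hφ : Measurable φ)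
    {f v : Ω → ℝ} (hf : Integrable f μ) (hv : Integrable v μ) {ε δ : ℝ}
    (hε : ∀ i, |∫ x in φ ⁻¹' {i}, (f x - v x) ∂μ| ≤ ε)
    (hδ : ∀ i, ∃ a, ∀ x ∈ φ ⁻¹' {i}, v x ∈ Icc a (a + δ)) :
    ∫ x, |fiberAverage μ φ f x - v x| ∂μ ≤ Fintype.card ι * ε + δ * μ.real univ := by
  have hg := integrable_fiberAverage (μ := μ) hφ f
  have hfiber (i : ι) : ∫ x in φ ⁻¹' {i}, |fiberAverage μ φ f x - v x| ∂μ ≤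
      ε + δ * μ.real (φ ⁻¹' {i}) := by
    obtain ⟨a, ha⟩ := hδ i
    set c := ⨍ x in φ ⁻¹' {i}, f x ∂μ
    have hrange : ∀ x ∈ φ ⁻¹' {i}, fiberAverage μ φ f x - v x ∈ Icc (c - a - δ) (c - a) :=
      fun x (hx : φ x = i) => by
        rw [fiberAverage, hx]
        constructor <;> linarith [(ha x hx).1, (ha x hx).2]
    have hsame : ∫ x in φ ⁻¹' {i}, (fiberAverage μ φ f x - v x) ∂μ =
        ∫ x in φ ⁻¹' {i}, (f x - v x) ∂μ := by
      rw [integral_sub hg.integrableOn hv.integrableOn,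
        integral_sub hf.integrableOn hv.integrableOn, setIntegral_fiber_fiberAverage hφ]
    have := setIntegral_abs_le_abs_setIntegral_add
      (F := fun x => fiberAverage μ φ f x - v x) (hφ (measurableSet_singleton i))
      (hg.sub hv).integrableOn hrange
    rw [hsame, show c - a - (c - a - δ) = δ by ring] at this
    linarith [hε i]
  calc ∫ x, |fiberAverage μ φ f x - v x| ∂μ
      = ∑ i, ∫ x in φ ⁻¹' {i}, |fiberAverage μ φ f x - v x| ∂μ :=
        integral_eq_sum_fiber hφ (hg.sub hv).abs
    _ ≤ ∑ i, (ε + δ * μ.real (φ ⁻¹' {i})) := Finset.sum_le_sum fun i _ => hfiber i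
    _ = Fintype.card ι * ε + δ * μ.real univ := by
        rw [Finset.sum_add_distrib, ← Finset.mul_sum, sum_measureReal_preimage_singleton
          _ fun i _ => hφ (measurableSet_singleton i)]
        simp

end FiberAverage

section Grid

noncomputable def gridPoint (n k : ℕ) : ℝ := -1 + 2 * k / n

-- Bin `0` is `[-1, gridPoint n 1]` (truncated subtraction sends `x = -1` there); bin `k ≠ 0` is
-- `(gridPoint n k, gridPoint n (k + 1)]`.
noncomputable def binIndex (n : ℕ) (x : ℝ) : ℕ := ⌈(x + 1) * n / 2⌉₊ - 1

variable {n k : ℕ} {x : ℝ}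

lemma measurable_binIndex (n : ℕ) : Measurable (binIndex n) :=
  (by fun_prop : Measurable fun x : ℝ => (x + 1) * n / 2).nat_ceil.sub_const 1

lemma le_gridPoint_iff (hn : 0 < n) : x ≤ gridPoint n k ↔ (x + 1) * n / 2 ≤ k := by
  have hn' : (0 : ℝ) < n := Nat.cast_pos.mpr hn
  rw [gridPoint, ← sub_le_iff_le_add', sub_neg_eq_add, le_div_iff₀ hn', div_le_iff₀ two_pos,
    mul_comm (k : ℝ)]

lemma gridPoint_lt_iff (hn : 0 < n) : gridPoint n k < x ↔ (k : ℝ) < (x + 1) * n / 2 := by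
  rw [← not_le, le_gridPoint_iff hn, not_le]

lemma gridPoint_succ (hn : 0 < n) (k : ℕ) : gridPoint n (k + 1) = gridPoint n k + 2 / n := by
  have hn' : (n : ℝ) ≠ 0 := Nat.cast_ne_zero.mpr hn.ne'
  simp only [gridPoint, Nat.cast_succ]
  field_simp
  ring

lemma gridPoint_mem_Icc (hk : k ≤ n) : gridPoint n k ∈ Icc (-1) 1 := by
  have hkn : (k : ℝ) ≤ n := Nat.cast_le.mpr hk
  refine ⟨le_add_of_nonneg_right (by positivity), ?_⟩
  have : 2 * (k : ℝ) / n ≤ 2 := div_le_of_le_mul₀ (Nat.cast_nonneg n) zero_le_two (by linarith)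
  simp only [gridPoint]
  linarith

lemma binIndex_lt (hn : 0 < n) (hx : x ≤ 1) : binIndex n x < n := by
  have hceil : ⌈(x + 1) * n / 2⌉₊ ≤ n := Nat.ceil_le.mpr <| by
    have hn' : (0 : ℝ) ≤ n := Nat.cast_nonneg n
    nlinarith
  unfold binIndex
  omega

lemma binIndex_eq_zero_iff (hn : 0 < n) : binIndex n x = 0 ↔ x ≤ gridPoint n 1 := by
  rw [le_gridPoint_iff hn, binIndex, Nat.sub_eq_zero_iff_le, Nat.ceil_le, Nat.cast_one]

lemma binIndex_eq_iff (hn : 0 < n) (hk : k ≠ 0) :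
    binIndex n x = k ↔ x ∈ Ioc (gridPoint n k) (gridPoint n (k + 1)) := by
  rw [mem_Ioc, gridPoint_lt_iff hn, le_gridPoint_iff hn, binIndex,
    show ⌈(x + 1) * n / 2⌉₊ - 1 = k ↔ ⌈(x + 1) * n / 2⌉₊ = k + 1 by omega,
    Nat.ceil_eq_iff k.succ_ne_zero, Nat.succ_sub_one]

lemma mem_Icc_gridPoint_binIndex (hn : 0 < n) (hx : -1 ≤ x) :
    x ∈ Icc (gridPoint n (binIndex n x)) (gridPoint n (binIndex n x) + 2 / n) := by
  rw [← gridPoint_succ hn]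
  rcases eq_or_ne (binIndex n x) 0 with h0 | h0
  · rw [h0]
    exact ⟨by simpa [gridPoint] using hx, (binIndex_eq_zero_iff hn).mp h0⟩
  · exact Ioc_subset_Icc_self ((binIndex_eq_iff hn h0).mp rfl)

end Grid

section IntervalBounds

variable {Ω : Type*} [MeasurableSpace Ω] {μ : Measure Ω} {h v : Ω → ℝ}

lemma abs_setIntegral_preimage_Ioc_le (hh : Integrable h μ) (hv : Measurable v) {a b C : ℝ}
    (hab : a < b) (hC : ∀ a', a < a' → a' ≤ b → |∫ x in v ⁻¹' Icc a' b, h x ∂μ| ≤ C) :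
    |∫ x in v ⁻¹' Ioc a b, h x ∂μ| ≤ C := by
  set a' : ℕ → ℝ := fun m => a + 1 / (m + 1)
  have ha'_gt (m : ℕ) : a < a' m := lt_add_of_pos_right a (by positivity)
  have ha' : Tendsto a' atTop (𝓝 a) := by
    simpa [a'] using (tendsto_const_nhds (x := a)).add tendsto_one_div_add_atTop_nhds_zero_nat
  have hunion : ⋃ m, v ⁻¹' Icc (a' m) b = v ⁻¹' Ioc a b := by
    rw [← preimage_iUnion, ← Ioi_inter_Iic, ← iUnion_Ici_eq_Ioi_of_lt_of_tendsto ha'_gt ha',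
      iUnion_inter]
    simp only [Ici_inter_Iic]
  have hmono : Monotone fun m => v ⁻¹' Icc (a' m) b := fun m m' hm =>
    preimage_mono (Icc_subset_Icc_left (by simp only [a']; gcongr))
  have hlim := tendsto_setIntegral_of_monotone (fun m => hv measurableSet_Icc) hmono
    (by rw [hunion]; exact hh.integrableOn)
  rw [hunion] at hlim
  refine le_of_tendsto hlim.abs ?_
  filter_upwards [ha'.eventually (gt_mem_nhds hab)] with m hm
  exact hC _ (ha'_gt m) hm.le

lemma abs_setIntegral_preimage_bin_le {n k : ℕ} (hn : 0 < n) (hk : k < n) (hh : Integrable h μ)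
    (hvm : Measurable v) (hv : ∀ ω, v ω ∈ Icc (-1 : ℝ) 1) {C : ℝ}
    (hC : ∀ a b, -1 ≤ a → a ≤ b → b ≤ 1 → |∫ x in v ⁻¹' Icc a b, h x ∂μ| ≤ C) :
    |∫ x in v ⁻¹' (binIndex n ⁻¹' {k}), h x ∂μ| ≤ C := by
  have hk1 := gridPoint_mem_Icc (n := n) (Nat.succ_le_of_lt hk)
  rcases eq_or_ne k 0 with rfl | hk0
  · have hbin : v ⁻¹' (binIndex n ⁻¹' {0}) = v ⁻¹' Icc (-1) (gridPoint n 1) := by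
      ext ω
      simp [binIndex_eq_zero_iff hn, (hv ω).1]
    rw [hbin]
    exact hC _ _ le_rfl hk1.1 hk1.2
  · have hbin : v ⁻¹' (binIndex n ⁻¹' {k}) = v ⁻¹' Ioc (gridPoint n k) (gridPoint n (k + 1)) := by
      ext ω
      simp [binIndex_eq_iff hn hk0]
    have hk' := gridPoint_mem_Icc (n := n) hk.le
    rw [hbin]
    refine abs_setIntegral_preimage_Ioc_le hh hvm ?_ fun a' ha' ha'b => hC _ _ ?_ ha'b hk1.2
    · rw [gridPoint_succ hn]
      exact lt_add_of_pos_right _ (by positivity)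
    · linarith [hk'.1]

end IntervalBounds

section CalibrationError

variable {Ω : Type*} [MeasurableSpace Ω] {μ : Measure Ω} {h v : Ω → ℝ}

lemma integrable_of_forall_mem_Icc [IsFiniteMeasure μ] (hm : Measurable h)
    (hh : ∀ ω, h ω ∈ Icc (-1 : ℝ) 1) : Integrable h μ :=
  .of_bound hm.aestronglyMeasurable 1 (ae_of_all _ fun ω => abs_le.mpr (hh ω))

lemma integral_mul_indicator_one_comp (h v : Ω → ℝ) (hv : Measurable v) {S : Set ℝ}
    (hS : MeasurableSet S) :
    ∫ ω, h ω * S.indicator (fun _ => (1 : ℝ)) (v ω) ∂μ = ∫ ω in v ⁻¹' S, h ω ∂μ := by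
  rw [← integral_indicator (hv hS)]
  congr 1 with ω
  by_cases hω : v ω ∈ S <;> simp [hω]

lemma abs_setIntegral_preimage_Icc_le_iSup (hh : Integrable h μ) (hv : Measurable v) {a b : ℝ}
    (hab : -1 ≤ a ∧ a ≤ b ∧ b ≤ 1) :
    |∫ ω in v ⁻¹' Icc a b, h ω ∂μ| ≤ ⨆ I : {q : ℝ × ℝ // -1 ≤ q.1 ∧ q.1 ≤ q.2 ∧ q.2 ≤ 1},
      |∫ ω, h ω * (Icc I.1.1 I.1.2).indicator (fun _ => (1 : ℝ)) (v ω) ∂μ| := by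
  simp only [integral_mul_indicator_one_comp h v hv measurableSet_Icc]
  refine le_ciSup (f := fun I : {q : ℝ × ℝ // -1 ≤ q.1 ∧ q.1 ≤ q.2 ∧ q.2 ≤ 1} =>
    |∫ ω in v ⁻¹' Icc I.1.1 I.1.2, h ω ∂μ|) ⟨∫ ω, |h ω| ∂μ, ?_⟩ ⟨(a, b), hab⟩
  rintro _ ⟨I, rfl⟩
  exact (abs_integral_le_integral_abs).trans
    (setIntegral_le_integral hh.abs (ae_of_all _ fun ω => abs_nonneg (h ω)))

end CalibrationError

lemma le_sqrt_add_of_forall_nat {D U : ℝ} (hU : 0 ≤ U)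
    (h : ∀ n : ℕ, 0 < n → D ≤ 2 / n + n * U) : D ≤ √(8 * U) + U := by
  have hreal (r : ℝ) (hr : 0 < r) : D ≤ 2 / r + (r + 1) * U := by
    have hn : 0 < ⌈r⌉₊ := Nat.ceil_pos.mpr hr
    calc D ≤ 2 / ⌈r⌉₊ + ⌈r⌉₊ * U := h _ hn
      _ ≤ 2 / r + (r + 1) * U := by
        gcongr
        · exact Nat.le_ceil r
        · exact (Nat.ceil_lt_add_one hr.le).le
  rcases hU.eq_or_lt with rfl | hU
  · refine le_of_forall_pos_le_add fun ε hε => ?_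
    simpa using hreal (2 / ε) (by positivity)
  set r := √(2 / U)
  have hr : 0 < r := Real.sqrt_pos.mpr (by positivity)
  have hr2 : r ^ 2 * U = 2 := by
    rw [Real.sq_sqrt (by positivity)]
    field_simp
  have hbalance : 2 / r = r * U := by
    rw [div_eq_iff hr.ne']
    linarith
  have hsqrt : √(8 * U) = 2 * r * U := by
    rw [show 8 * U = (2 * r * U) ^ 2 by nlinarith [hr2]]
    exact Real.sqrt_sq (by positivity)
  calc D ≤ 2 / r + (r + 1) * U := hreal r hr
    _ = √(8 * U) + U := by rw [hsqrt, hbalance]; ring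

lemma exists_calibrated_integral_abs_sub_le {Ω : Type*} [MeasurableSpace Ω] {μ : Measure Ω}
    [IsProbabilityMeasure μ] {uY v : Ω → ℝ} (huY : ∀ ω, uY ω ∈ Icc (-1 : ℝ) 1)
    (hv : ∀ ω, v ω ∈ Icc (-1 : ℝ) 1) (hmuY : Measurable uY) (hmv : Measurable v) {C : ℝ}
    (hC : ∀ a b, -1 ≤ a → a ≤ b → b ≤ 1 → |∫ ω in v ⁻¹' Icc a b, (uY ω - v ω) ∂μ| ≤ C)
    {n : ℕ} (hn : 0 < n) :
    ∃ g : Ω → ℝ, Measurable g ∧ (∀ ω, g ω ∈ Icc (-1 : ℝ) 1) ∧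
      μ[uY | MeasurableSpace.comap g inferInstance] =ᵐ[μ] g ∧
      ∫ ω, |g ω - v ω| ∂μ ≤ 2 / n + n * C := by
  have huY_int : Integrable uY μ := integrable_of_forall_mem_Icc hmuY huY
  have hv_int : Integrable v μ := integrable_of_forall_mem_Icc hmv hv
  let φ : Ω → Fin n := fun ω => ⟨binIndex n (v ω), binIndex_lt hn (hv ω).2⟩
  have hfiber (i : Fin n) : φ ⁻¹' {i} = v ⁻¹' (binIndex n ⁻¹' {(i : ℕ)}) := by
    ext ω
    simp [φ, Fin.ext_iff]
  have hφ : Measurable φ := measurable_to_countable' fun i => by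
    rw [hfiber]
    exact hmv (measurable_binIndex n (measurableSet_singleton _))
  refine ⟨fiberAverage μ φ uY, measurable_fiberAverage hφ uY,
    fun ω => abs_le.mp (abs_fiberAverage_le huY_int (fun x => abs_le.mpr (huY x)) ω),
    condExp_comap_fiberAverage hφ huY_int, ?_⟩
  have hdist := integral_abs_fiberAverage_sub_le hφ huY_int hv_int (ε := C) (δ := 2 / n)
    (fun i => by
      rw [hfiber]
      exact abs_setIntegral_preimage_bin_le hn i.isLt (huY_int.sub hv_int) hmv hv hC)
    (fun i => ⟨gridPoint n i, fun ω (hω : φ ω = i) => by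
      simpa [φ, ← hω] using mem_Icc_gridPoint_binIndex hn (hv ω).1⟩)
  simpa [add_comm] using hdist

end DistanceToCalibration

open DistanceToCalibration in
/-- the distance to the nearest perfectly calibrated utility predictor
satisfies DCU(f,u) ≤ √(8·UC(f,u)) + UC(f,u). -/
theorem stmt_1 {Ω : Type*} [MeasurableSpace Ω] (μ : Measure Ω) [IsProbabilityMeasure μ]
    (uY v : Ω → ℝ)
    (huY : ∀ ω, uY ω ∈ Icc (-1 : ℝ) 1) (hv : ∀ ω, v ω ∈ Icc (-1 : ℝ) 1)
    (hmuY : Measurable uY) (hmv : Measurable v)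
    (UC : ℝ)
    (hUC : UC = ⨆ I : {q : ℝ × ℝ // -1 ≤ q.1 ∧ q.1 ≤ q.2 ∧ q.2 ≤ 1},
      |∫ ω, (uY ω - v ω) * (Icc I.1.1 I.1.2).indicator (fun _ => (1 : ℝ)) (v ω) ∂μ|)
    (DCU : ℝ)
    (hDCU : DCU = sInf {d : ℝ | ∃ g : Ω → ℝ, Measurable g ∧ (∀ ω, g ω ∈ Icc (-1 : ℝ) 1) ∧
      (μ[uY | MeasurableSpace.comap g (by infer_instance)] =ᵐ[μ] g) ∧
      d = ∫ ω, |g ω - v ω| ∂μ}) :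
    DCU ≤ Real.sqrt (8 * UC) + UC := by
  have hdiff : Integrable (fun ω => uY ω - v ω) μ :=
    (integrable_of_forall_mem_Icc hmuY huY).sub (integrable_of_forall_mem_Icc hmv hv)
  have hIcc : ∀ a b, -1 ≤ a → a ≤ b → b ≤ 1 →
      |∫ ω in v ⁻¹' Icc a b, (uY ω - v ω) ∂μ| ≤ UC := fun a b ha hab hb =>
    hUC ▸ abs_setIntegral_preimage_Icc_le_iSup hdiff hmv ⟨ha, hab, hb⟩
  have hUC_nonneg : 0 ≤ UC := (abs_nonneg _).trans (hIcc (-1) 1 le_rfl (by norm_num) le_rfl)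
  refine le_sqrt_add_of_forall_nat hUC_nonneg fun n hn => ?_
  obtain ⟨g, hgm, hg, hcal, hdist⟩ :=
    exists_calibrated_integral_abs_sub_le huY hv hmuY hmv hIcc hn
  rw [hDCU]
  refine (csInf_le ⟨0, ?_⟩ ?_).trans hdist
  · rintro _ ⟨g, -, -, -, rfl⟩
    exact integral_nonneg fun ω => abs_nonneg _
  · exact ⟨g, hgm, hg, hcal, rfl⟩
end

section
/- In the iterative patching algorithm with step size η_t = err_t/C, each update strictly decreases the Brier score by at least err_t²/C: L(f^{(t+1)}) - L(f^{(t)}) ≤ -err_t²/C, where err_t = E[⟨f^{(t)}(X) - Y, w_t(f^{(t)}(X))⟩] and the witness satisfies ‖w_t(p)‖₂² ≤ C pointwise. Consequently, since the Brier score L(f) = E‖Y - f(X)‖₂² lies in [0,2], the algorithm terminates (err_t ≤ ε) in at most 2C/ε² iterations. -/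
/-!
The projection onto the simplex is nonexpansive and the label `Y` lies in the simplex, so the
patched prediction is no farther from `Y` than the unprojected step `p - η w(p)`. Expanding that
square, `‖Y - (p - η w)‖² = ‖Y - p‖² - 2η⟪p - Y, w⟫ + η²‖w‖²`, and taking expectations with
`‖w‖² ≤ C` gives `L(f⁺) ≤ L(f) - 2η err + η² C`, which for `η = err/C` is `L(f) - err²/C`.
Since `0 ≤ L ≤ 2` (both `Y` and `f(X)` lie in the simplex), the decrements `err_t²/C` cannot all
exceed `ε²/C` for more than `2C/ε²` steps.
-/

open MeasureTheory Set RealInnerProductSpace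

section Descent

variable {E : Type*} [NormedAddCommGroup E] [InnerProductSpace ℝ E]

theorem sq_norm_sub_proj_sub_smul_le {S : Set E} {proj : E → E}
    (hproj : ∀ z y, y ∈ S → ‖y - proj z‖ ≤ ‖y - z‖) {y : E} (hy : y ∈ S) (p v : E) (η : ℝ) :
    ‖y - proj (p - η • v)‖ ^ 2 ≤ ‖y - p‖ ^ 2 - 2 * η * ⟪p - y, v⟫ + η ^ 2 * ‖v‖ ^ 2 := by
  have hexpand : ‖y - (p - η • v)‖ ^ 2 = ‖y - p‖ ^ 2 - 2 * η * ⟪p - y, v⟫ + η ^ 2 * ‖v‖ ^ 2 := by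
    rw [show y - (p - η • v) = (y - p) + η • v by abel, norm_add_sq_real, real_inner_smul_right,
      norm_smul, mul_pow, Real.norm_eq_abs, sq_abs, ← neg_sub p y, inner_neg_left]
    ring
  rw [← hexpand]
  gcongr
  exact hproj _ _ hy

theorem integral_sq_norm_sub_proj_sub_smul_le {Ω : Type*} [MeasurableSpace Ω] {μ : Measure Ω}
    [IsProbabilityMeasure μ] {S : Set E} {proj : E → E}
    (hproj : ∀ z y, y ∈ S → ‖y - proj z‖ ≤ ‖y - z‖) {Y p v : Ω → E} (hY : ∀ ω, Y ω ∈ S)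
    {c : ℝ} (hv : ∀ ω, ‖v ω‖ ^ 2 ≤ c) (η : ℝ)
    (hint_next : Integrable (fun ω => ‖Y ω - proj (p ω - η • v ω)‖ ^ 2) μ)
    (hint_sq : Integrable (fun ω => ‖Y ω - p ω‖ ^ 2) μ)
    (hint_inner : Integrable (fun ω => ⟪p ω - Y ω, v ω⟫) μ) :
    ∫ ω, ‖Y ω - proj (p ω - η • v ω)‖ ^ 2 ∂μ ≤
      ∫ ω, ‖Y ω - p ω‖ ^ 2 ∂μ - 2 * η * ∫ ω, ⟪p ω - Y ω, v ω⟫ ∂μ + η ^ 2 * c := by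
  have hbound : ∀ ω, ‖Y ω - proj (p ω - η • v ω)‖ ^ 2 ≤
      ‖Y ω - p ω‖ ^ 2 - 2 * η * ⟪p ω - Y ω, v ω⟫ + η ^ 2 * c := fun ω =>
    (sq_norm_sub_proj_sub_smul_le hproj (hY ω) _ _ η).trans
      (by gcongr; exact hv ω)
  have hint_diff : Integrable (fun ω => ‖Y ω - p ω‖ ^ 2 - 2 * η * ⟪p ω - Y ω, v ω⟫) μ :=
    hint_sq.sub (hint_inner.const_mul _)
  have hint_bound : Integrable
      (fun ω => ‖Y ω - p ω‖ ^ 2 - 2 * η * ⟪p ω - Y ω, v ω⟫ + η ^ 2 * c) μ :=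
    hint_diff.add (integrable_const _)
  refine (integral_mono hint_next hint_bound hbound).trans_eq ?_
  rw [integral_add hint_diff (integrable_const _), integral_sub hint_sq (hint_inner.const_mul _), integral_const_mul, integral_const,
    probReal_univ, one_smul]

end Descent

theorem exists_lt_of_forall_le_sub {a d : ℕ → ℝ} (ha : ∀ n, 0 ≤ a n) {B δ : ℝ} (ha0 : a 0 ≤ B)
    (hdec : ∀ n, a (n + 1) ≤ a n - d n) (hδ : 0 < δ) : ∃ n : ℕ, (n : ℝ) ≤ B / δ ∧ d n < δ := by
  by_contra! hd
  have hB : 0 ≤ B / δ := div_nonneg ((ha 0).trans ha0) hδ.le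
  set N := ⌊B / δ⌋₊
  have hle : ∀ n ≤ N + 1, a n ≤ B - n * δ := by
    intro n hn
    induction n with
    | zero => simpa using ha0
    | succ n ih =>
      have hdn : δ ≤ d n := hd n ((Nat.cast_le.mpr (by omega)).trans (Nat.floor_le hB))
      push_cast
      linarith [hdec n, ih (by omega)]
  have hN : B / δ < N + 1 := Nat.lt_floor_add_one _
  have hneg := hle (N + 1) le_rfl
  push_cast at hneg
  linarith [ha (N + 1), (div_lt_iff₀ hδ).mp hN]

section Simplex

variable {ι : Type*} [Fintype ι]

theorem EuclideanSpace.sq_norm_le_card_of_mem_Icc {v : EuclideanSpace ℝ ι}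
    (hv : ∀ i, v i ∈ Icc (-1 : ℝ) 1) : ‖v‖ ^ 2 ≤ Fintype.card ι := by
  rw [EuclideanSpace.real_norm_sq_eq, ← Finset.card_univ, ← nsmul_one, ← Finset.sum_const]
  gcongr with i
  rw [sq_le_one_iff_abs_le_one, abs_le]
  exact hv i

theorem EuclideanSpace.sq_norm_le_one_of_simplex {p : EuclideanSpace ℝ ι} (hp0 : ∀ i, 0 ≤ p i)
    (hp1 : ∑ i, p i = 1) : ‖p‖ ^ 2 ≤ 1 := by
  rw [EuclideanSpace.real_norm_sq_eq, ← hp1]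
  gcongr with i
  have hle : p i ≤ 1 := hp1 ▸ Finset.single_le_sum (fun j _ => hp0 j) (Finset.mem_univ i)
  nlinarith [hp0 i]

theorem EuclideanSpace.sq_norm_single_one_sub_le_two [DecidableEq ι] {p : EuclideanSpace ℝ ι}
    (hp0 : ∀ i, 0 ≤ p i) (hp1 : ∑ i, p i = 1) (i : ι) :
    ‖EuclideanSpace.single i (1 : ℝ) - p‖ ^ 2 ≤ 2 := by
  rw [norm_sub_sq_real, EuclideanSpace.inner_single_left]
  simp only [PiLp.norm_single, norm_one, map_one, one_mul]
  linarith [hp0 i, sq_norm_le_one_of_simplex hp0 hp1]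

end Simplex
theorem stmt_7_general {Ω 𝒳 : Type*} [MeasurableSpace Ω] (μ : Measure Ω) [IsProbabilityMeasure μ]
    (C : ℕ) (hC : 0 < C)
    (Xv : Ω → 𝒳) (Yv : Ω → EuclideanSpace ℝ (Fin C))
    (hY : ∀ ω, ∃ i : Fin C, Yv ω = EuclideanSpace.single i 1)
    (S : Set (EuclideanSpace ℝ (Fin C)))
    (hS : S = {p | (∀ i, 0 ≤ p i) ∧ ∑ i, p i = 1})
    (proj : EuclideanSpace ℝ (Fin C) → EuclideanSpace ℝ (Fin C))
    (hproj : ∀ z y, y ∈ S → ‖y - proj z‖ ≤ ‖y - z‖)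
    (f : ℕ → 𝒳 → EuclideanSpace ℝ (Fin C)) (hf : ∀ t x, f t x ∈ S)
    (w : ℕ → EuclideanSpace ℝ (Fin C) → EuclideanSpace ℝ (Fin C))
    (hw : ∀ t p i, w t p i ∈ Icc (-1 : ℝ) 1)
    (err : ℕ → ℝ)
    (herr : ∀ t, err t = ∫ ω, ⟪f t (Xv ω) - Yv ω, w t (f t (Xv ω))⟫ ∂μ)
    (herrint : ∀ t, Integrable (fun ω => ⟪f t (Xv ω) - Yv ω, w t (f t (Xv ω))⟫) μ)
    (hrec : ∀ t x, f (t + 1) x = proj (f t x - (err t / (C : ℝ)) • w t (f t x)))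
    (L : (𝒳 → EuclideanSpace ℝ (Fin C)) → ℝ)
    (hL : ∀ g, L g = ∫ ω, ‖Yv ω - g (Xv ω)‖ ^ 2 ∂μ)
    (hLint : ∀ t, Integrable (fun ω => ‖Yv ω - f t (Xv ω)‖ ^ 2) μ) :
    (∀ t, L (f (t + 1)) - L (f t) ≤ -(err t) ^ 2 / (C : ℝ)) ∧
    (∀ ε : ℝ, 0 < ε → ∃ t : ℕ, (t : ℝ) ≤ 2 * (C : ℝ) / ε ^ 2 ∧ err t ≤ ε) := by
  have hC' : (0 : ℝ) < C := Nat.cast_pos.mpr hC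
  have hYS : ∀ ω, Yv ω ∈ S := fun ω => by
    obtain ⟨i, hi⟩ := hY ω
    subst hS
    refine ⟨fun j => ?_, ?_⟩ <;> simp [hi, PiLp.single_apply, apply_ite]
  have hstep : ∀ t, L (f (t + 1)) - L (f t) ≤ -(err t) ^ 2 / C := fun t => by
    have hLnext := hLint (t + 1)
    simp only [hrec] at hLnext
    have := integral_sq_norm_sub_proj_sub_smul_le hproj hYS
      (fun ω => by simpa using EuclideanSpace.sq_norm_le_card_of_mem_Icc (hw t (f t (Xv ω))))
      (err t / C) hLnext (hLint t) (herrint t)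
    simp only [← hrec, ← hL, ← herr] at this
    have hquad : -2 * (err t / C) * err t + (err t / C) ^ 2 * C = -(err t) ^ 2 / C := by
      field_simp; ring
    linarith
  refine ⟨hstep, fun ε hε => ?_⟩
  have hL0 : L (f 0) ≤ 2 := by
    rw [hL]
    refine (integral_mono (hLint 0) (integrable_const 2) fun ω => ?_).trans_eq (by simp)
    obtain ⟨i, hi⟩ := hY ω
    obtain ⟨hp0, hp1⟩ := hS ▸ hf 0 (Xv ω)
    simpa [hi] using EuclideanSpace.sq_norm_single_one_sub_le_two hp0 hp1 i
  obtain ⟨t, ht, hlt⟩ := exists_lt_of_forall_le_sub (d := fun n => err n ^ 2 / C)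
    (fun n => (hL (f n)).symm ▸ integral_nonneg fun ω => sq_nonneg _) hL0
    (fun n => by linarith [hstep n, neg_div (C : ℝ) (err n ^ 2)]) (div_pos (pow_pos hε 2) hC')
  refine ⟨t, by rwa [div_div_eq_mul_div] at ht, ?_⟩
  rw [div_lt_div_iff_of_pos_right hC'] at hlt
  exact ((le_abs_self _).trans_lt (abs_lt_of_sq_lt_sq hlt hε.le)).le

/-- each iteration of the patching algorithm with stepsize `err_t/C` decreases the
Brier score by at least `err_t²/C`; consequently some iteration `t ≤ 2C/ε²` has `err_t ≤ ε`. -/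
theorem stmt_7 {Ω 𝒳 : Type*} [MeasurableSpace Ω] (μ : Measure Ω) [IsProbabilityMeasure μ]
    (C : ℕ) (hC : 0 < C)
    (Xv : Ω → 𝒳) (Yv : Ω → EuclideanSpace ℝ (Fin C))
    (hY : ∀ ω, ∃ i : Fin C, Yv ω = EuclideanSpace.single i 1)
    (S : Set (EuclideanSpace ℝ (Fin C)))
    (hS : S = {p | (∀ i, 0 ≤ p i) ∧ ∑ i, p i = 1})
    (proj : EuclideanSpace ℝ (Fin C) → EuclideanSpace ℝ (Fin C))
    (hprojS : ∀ z, proj z ∈ S)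
    (hproj : ∀ z y, y ∈ S → ‖y - proj z‖ ≤ ‖y - z‖)
    (f : ℕ → 𝒳 → EuclideanSpace ℝ (Fin C)) (hf : ∀ t x, f t x ∈ S)
    (w : ℕ → EuclideanSpace ℝ (Fin C) → EuclideanSpace ℝ (Fin C))
    (hw : ∀ t p i, w t p i ∈ Icc (-1 : ℝ) 1)
    (err : ℕ → ℝ)
    (herr : ∀ t, err t = ∫ ω, ⟪f t (Xv ω) - Yv ω, w t (f t (Xv ω))⟫ ∂μ)
    (herrint : ∀ t, Integrable (fun ω => ⟪f t (Xv ω) - Yv ω, w t (f t (Xv ω))⟫) μ)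
    (hrec : ∀ t x, f (t + 1) x = proj (f t x - (err t / (C : ℝ)) • w t (f t x)))
    (L : (𝒳 → EuclideanSpace ℝ (Fin C)) → ℝ)
    (hL : ∀ g, L g = ∫ ω, ‖Yv ω - g (Xv ω)‖ ^ 2 ∂μ)
    (hLint : ∀ t, Integrable (fun ω => ‖Yv ω - f t (Xv ω)‖ ^ 2) μ) :
    (∀ t, L (f (t + 1)) - L (f t) ≤ -(err t) ^ 2 / (C : ℝ)) ∧
    (∀ ε : ℝ, 0 < ε → ∃ t : ℕ, (t : ℝ) ≤ 2 * (C : ℝ) / ε ^ 2 ∧ err t ≤ ε) :=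
  stmt_7_general μ C hC Xv Yv hY S hS proj hproj f hf w hw err herr herrint hrec L hL hLint
end

section
/- There exists a distribution over (p_X, Y_X) with p_X ∈ {0.45, 0.55} (each with probability 1/2), E[Y_X | p_X = 0.45] = 0.05 and E[Y_X | p_X = 0.55] = 0.95, such that the binned calibration error with bins [0,1/3), [1/3,2/3), [2/3,1] is exactly 0, while the worst-interval calibration error satisfies UC ≥ 0.2 (witnessed by the interval [0.45, 0.46]). -/
/-!
Both atoms 0.45 and 0.55 lie in the middle bin `[1/3, 2/3)`, where the miscalibrations
`0.45 - 0.05 = 0.4` and `0.55 - 0.95 = -0.4`, each of mass `1/2`, cancel. The interval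
`[0.45, 0.46]` contains only the first atom, so it sees a miscalibration of `0.4 · 1/2 = 0.2`.
-/

open MeasureTheory Set
open scoped NNReal ENNReal

section SumSmulDirac

variable {α ι : Type*} [MeasurableSpace α] [MeasurableSingletonClass α] [Fintype ι]
  (w : ι → ℝ≥0) (a : ι → α)

lemma sum_smul_dirac_apply (s : Set α) :
    (∑ i, w i • Measure.dirac (a i)) s = ↑(∑ i, w i * s.indicator 1 (a i)) := by
  simp only [Measure.finsetSum_apply, Measure.smul_apply, Measure.dirac_apply,
    ENNReal.ofNNReal_finsetSum, ENNReal.coe_mul]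
  refine Finset.sum_congr rfl fun i _ => ?_
  by_cases h : a i ∈ s <;> simp [h]

lemma isProbabilityMeasure_sum_smul_dirac (hw : ∑ i, w i = 1) :
    IsProbabilityMeasure (∑ i, w i • Measure.dirac (a i)) :=
  ⟨by simp [sum_smul_dirac_apply, hw]⟩

lemma ae_sum_smul_dirac_of_forall {P : α → Prop} (hP : ∀ i, P (a i)) :
    ∀ᵐ x ∂(∑ i, w i • Measure.dirac (a i)), P x := by
  rw [ae_iff, sum_smul_dirac_apply, ENNReal.coe_eq_zero]
  exact Finset.sum_eq_zero fun i _ => by simp [hP i]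

lemma integral_sum_smul_dirac (f : α → ℝ) :
    ∫ x, f x ∂(∑ i, w i • Measure.dirac (a i)) = ∑ i, (w i : ℝ) * f (a i) := by
  have hf : ∀ i, Integrable f (Measure.dirac (a i)) := fun i =>
    (integrable_const (f (a i))).congr (ae_eq_dirac f).symm
  rw [integral_finsetSum_measure fun i _ => (hf i).smul_measure_nnreal]
  simp only [integral_smul_nnreal_measure, integral_dirac, NNReal.smul_def, smul_eq_mul]

lemma setIntegral_sum_smul_dirac (f : α → ℝ) {s : Set α} (hs : MeasurableSet s) :
    ∫ x in s, f x ∂(∑ i, w i • Measure.dirac (a i)) = ∑ i, (w i : ℝ) * s.indicator f (a i) := by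
  rw [← integral_indicator hs, integral_sum_smul_dirac]

end SumSmulDirac

-- The atom `(p, y)` has mass `P(p_X = p) · P(Y_X = y | p_X = p)`, e.g. `19/40 = 1/2 · 0.95`.
noncomputable def calibrationExample : Measure (ℝ × ℝ) :=
  ∑ i, (![19 / 40, 1 / 40, 1 / 40, 19 / 40] : Fin 4 → ℝ≥0) i •
    Measure.dirac ((![(0.45, 0), (0.45, 1), (0.55, 0), (0.55, 1)] : Fin 4 → ℝ × ℝ) i)

/-- there is a distribution over `(p_X, Y_X)` with `p_X ∈ {0.45, 0.55}` (each with
probability 1/2), `E[Y_X | p_X = 0.45] = 0.05`, `E[Y_X | p_X = 0.55] = 0.95`, whose binned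
calibration error with bins `[0,1/3), [1/3,2/3), [2/3,1]` is exactly `0`, while the worst-interval
calibration error is at least `0.2`, witnessed by the interval `[0.45, 0.46]`. -/
theorem stmt_9 : ∃ μ : Measure (ℝ × ℝ), IsProbabilityMeasure μ ∧
    μ {x | x.1 = 0.45} = 1 / 2 ∧ μ {x | x.1 = 0.55} = 1 / 2 ∧
    (∀ᵐ x ∂μ, x.2 = 0 ∨ x.2 = 1) ∧
    (∫ x in {x : ℝ × ℝ | x.1 = 0.45}, x.2 ∂μ) = 0.05 * (1 / 2) ∧
    (∫ x in {x : ℝ × ℝ | x.1 = 0.55}, x.2 ∂μ) = 0.95 * (1 / 2) ∧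
    (|∫ x, (x.1 - x.2) * (Ico (0 : ℝ) (1 / 3)).indicator (fun _ => (1 : ℝ)) x.1 ∂μ| +
      |∫ x, (x.1 - x.2) * (Ico (1 / 3 : ℝ) (2 / 3)).indicator (fun _ => (1 : ℝ)) x.1 ∂μ| +
      |∫ x, (x.1 - x.2) * (Icc (2 / 3 : ℝ) 1).indicator (fun _ => (1 : ℝ)) x.1 ∂μ|) = 0 ∧
    0.2 ≤ |∫ x, (x.2 - x.1) * (Icc (0.45 : ℝ) 0.46).indicator (fun _ => (1 : ℝ)) x.1 ∂μ| := by
  have half_eq_coe : (1 / 2 : ℝ≥0∞) = ((1 / 2 : ℝ≥0) : ℝ≥0∞) := by simp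
  have hfst (c : ℝ) : MeasurableSet {x : ℝ × ℝ | x.1 = c} :=
    measurable_fst (measurableSet_singleton c)
  refine ⟨calibrationExample, isProbabilityMeasure_sum_smul_dirac _ _ ?_, ?_, ?_, ?_, ?_, ?_, ?_, ?_⟩
  · rw [← NNReal.coe_inj]
    simp [Fin.sum_univ_four]
    norm_num
  · rw [calibrationExample, sum_smul_dirac_apply, half_eq_coe, ENNReal.coe_inj, ← NNReal.coe_inj]
    simp [Fin.sum_univ_four]
    norm_num
  · rw [calibrationExample, sum_smul_dirac_apply, half_eq_coe, ENNReal.coe_inj, ← NNReal.coe_inj]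
    simp [Fin.sum_univ_four]
    norm_num
  · exact ae_sum_smul_dirac_of_forall _ _ fun i => by fin_cases i <;> norm_num
  · rw [calibrationExample, setIntegral_sum_smul_dirac _ _ _ (hfst _)]
    simp [Fin.sum_univ_four, indicator_apply]
    norm_num
  · rw [calibrationExample, setIntegral_sum_smul_dirac _ _ _ (hfst _)]
    simp [Fin.sum_univ_four, indicator_apply]
    norm_num
  · simp only [calibrationExample, integral_sum_smul_dirac]
    simp [Fin.sum_univ_four, indicator_apply]
    norm_num
  · simp only [calibrationExample, integral_sum_smul_dirac]
    simp [Fin.sum_univ_four, indicator_apply]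
    norm_num
end

section
/- If F and G are cumulative distribution functions on the real line supported on [0,2] satisfying F(e - ε) ≤ G(e) ≤ F(e + ε) for all e, then the L² distance on [0,2] satisfies ‖F - G‖_{L²([0,2])} ≤ √(2ε). -/
open MeasureTheory Set

/-- if `F` and `G` are CDFs supported on `[0,2]` with
`F(e-ε) ≤ G(e) ≤ F(e+ε)` for all `e`, then `‖F - G‖_{L²([0,2])} ≤ √(2ε)`. -/
theorem stmt_10 (F G : ℝ → ℝ) (ε : ℝ) (hε : 0 < ε)
    (hFmono : Monotone F) (hGmono : Monotone G)
    (hF0 : ∀ x < (0 : ℝ), F x = 0) (hF1 : ∀ x ≥ (2 : ℝ), F x = 1)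
    (hG0 : ∀ x < (0 : ℝ), G x = 0) (hG1 : ∀ x ≥ (2 : ℝ), G x = 1)
    (hshift : ∀ e : ℝ, F (e - ε) ≤ G e ∧ G e ≤ F (e + ε)) :
    Real.sqrt (∫ e in Icc (0 : ℝ) 2, (F e - G e) ^ 2) ≤ Real.sqrt (2 * ε) := by
  -- bounds on F and G
  have hFlb : ∀ x, 0 ≤ F x := by
    intro x
    rcases lt_or_ge x 0 with h | h
    · exact (hF0 x h).ge
    · have := hFmono (show (-1 : ℝ) ≤ x by linarith)
      rw [hF0 (-1) (by norm_num)] at this; exact this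
  have hFub : ∀ x, F x ≤ 1 := by
    intro x
    rcases le_or_gt 2 x with h | h
    · exact (hF1 x h).le
    · have := hFmono (show x ≤ 2 by linarith)
      rw [hF1 2 le_rfl] at this; exact this
  have hGlb : ∀ x, 0 ≤ G x := by
    intro x
    rcases lt_or_ge x 0 with h | h
    · exact (hG0 x h).ge
    · have := hGmono (show (-1 : ℝ) ≤ x by linarith)
      rw [hG0 (-1) (by norm_num)] at this; exact this
  have hGub : ∀ x, G x ≤ 1 := by
    intro x
    rcases le_or_gt 2 x with h | h
    · exact (hG1 x h).le
    · have := hGmono (show x ≤ 2 by linarith)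
      rw [hG1 2 le_rfl] at this; exact this
  -- pointwise: (F - G)^2 ≤ F(e+ε) - F(e-ε), and (F-G)^2 ≤ 1
  have habs : ∀ e, |F e - G e| ≤ 1 := by
    intro e
    rw [abs_le]
    constructor <;> nlinarith [hFlb e, hFub e, hGlb e, hGub e]
  have hsq1 : ∀ e, (F e - G e) ^ 2 ≤ 1 := by
    intro e
    have := habs e
    nlinarith [abs_nonneg (F e - G e), sq_abs (F e - G e)]
  have hsqle : ∀ e, (F e - G e) ^ 2 ≤ F (e + ε) - F (e - ε) := by
    intro e
    have h1 := (hshift e).1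
    have h2 := (hshift e).2
    have h3 : F (e - ε) ≤ F e := hFmono (by linarith)
    have h4 : F e ≤ F (e + ε) := hFmono (by linarith)
    have habs2 : |F e - G e| ≤ F (e + ε) - F (e - ε) := by
      rw [abs_le]; constructor <;> linarith
    nlinarith [abs_nonneg (F e - G e), sq_abs (F e - G e), habs e]
  -- integrability facts
  have hFG2meas : Measurable fun e => (F e - G e) ^ 2 :=
    ((hFmono.measurable.sub hGmono.measurable).pow_const 2)
  have hFG2int : ∀ a b : ℝ, IntegrableOn (fun e => (F e - G e) ^ 2) (Icc a b) :=
    by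
    intro a b
    refine Integrable.mono' (integrable_const 1) hFG2meas.aestronglyMeasurable ?_
    filter_upwards with x
    rw [Real.norm_eq_abs, abs_of_nonneg (sq_nonneg _)]
    exact hsq1 x
  have hFint : ∀ a b : ℝ, IntervalIntegrable F volume a b := fun a b =>
    hFmono.intervalIntegrable
  have hFshiftint : ∀ (c a b : ℝ), IntervalIntegrable (fun e => F (e + c)) volume a b :=
    fun c a b => (hFmono.comp (fun x y h => by simpa using add_le_add_right h c :
      Monotone fun x : ℝ => x + c)).intervalIntegrable
  -- main bound on the integral
  have key : (∫ e in Icc (0 : ℝ) 2, (F e - G e) ^ 2) ≤ 2 * ε := by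
    rcases le_or_gt 1 ε with h1 | h1
    · -- trivial case ε ≥ 1
      have : (∫ e in Icc (0 : ℝ) 2, (F e - G e) ^ 2)
          ≤ ∫ _ in Icc (0 : ℝ) 2, (1 : ℝ) := by
        refine setIntegral_mono_on (hFG2int 0 2) ((integrableOn_const_iff).mpr ?_)
          measurableSet_Icc (fun x _ => hsq1 x)
        right
        rw [Real.volume_Icc]; exact ENNReal.ofReal_lt_top
      calc (∫ e in Icc (0 : ℝ) 2, (F e - G e) ^ 2)
          ≤ ∫ _ in Icc (0 : ℝ) 2, (1 : ℝ) := this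
        _ = 2 := by
            rw [setIntegral_const, Real.volume_real_Icc, smul_eq_mul, mul_one]
            norm_num [ENNReal.toReal_ofReal]
        _ ≤ 2 * ε := by linarith
    · -- case ε < 1
      have hIcc : (∫ e in Icc (0 : ℝ) 2, (F e - G e) ^ 2)
          = ∫ e in (0 : ℝ)..2, (F e - G e) ^ 2 := by
        rw [intervalIntegral.integral_of_le (by norm_num : (0:ℝ) ≤ 2),
          MeasureTheory.integral_Icc_eq_integral_Ioc]
      rw [hIcc]
      have hmono_int : (∫ e in (0 : ℝ)..2, (F e - G e) ^ 2)
          ≤ ∫ e in (0 : ℝ)..2, (F (e + ε) - F (e - ε)) := by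
        refine intervalIntegral.integral_mono_on (by norm_num) ?_ ?_ (fun x _ => hsqle x)
        · rw [intervalIntegrable_iff_integrableOn_Ioc_of_le (by norm_num : (0:ℝ) ≤ 2)]
          exact (hFG2int 0 2).mono_set Ioc_subset_Icc_self
        · have := (hFshiftint ε 0 2).sub (by simpa [sub_eq_add_neg] using hFshiftint (-ε) 0 2)
          simpa [sub_eq_add_neg] using this
      have hsplit : (∫ e in (0 : ℝ)..2, (F (e + ε) - F (e - ε)))
          = (∫ e in (2 - ε)..(2 + ε), F e) - ∫ e in (-ε)..ε, F e := by
        rw [intervalIntegral.integral_sub (hFshiftint ε 0 2)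
          (by simpa [sub_eq_add_neg] using hFshiftint (-ε) 0 2)]
        rw [intervalIntegral.integral_comp_add_right F ε,
          intervalIntegral.integral_comp_sub_right F ε]
        have e1 : (∫ e in (0 + ε)..(2 + ε), F e)
            = (∫ e in (0 + ε)..(2 - ε), F e) + ∫ e in (2 - ε)..(2 + ε), F e :=
          (intervalIntegral.integral_add_adjacent_intervals (hFint _ _) (hFint _ _)).symm
        have e2 : (∫ e in (0 - ε)..(2 - ε), F e)
            = (∫ e in (0 - ε)..(0 + ε), F e) + ∫ e in (0 + ε)..(2 - ε), F e :=
          (intervalIntegral.integral_add_adjacent_intervals (hFint _ _) (hFint _ _)).symm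
        rw [e1, e2]
        have : (0 : ℝ) - ε = -ε := by ring
        rw [this, zero_add]
        ring
      have hb1 : (∫ e in (2 - ε)..(2 + ε), F e) ≤ 2 * ε := by
        calc (∫ e in (2 - ε)..(2 + ε), F e)
            ≤ ∫ _ in (2 - ε)..(2 + ε), (1 : ℝ) := by
              refine intervalIntegral.integral_mono_on (by linarith) (hFint _ _)
                intervalIntegrable_const (fun x _ => hFub x)
          _ = 2 * ε := by
              rw [intervalIntegral.integral_const, smul_eq_mul, mul_one]; ring
      have hb2 : (0 : ℝ) ≤ ∫ e in (-ε)..ε, F e :=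
        intervalIntegral.integral_nonneg (by linarith) (fun x _ => hFlb x)
      linarith [hmono_int]
  exact Real.sqrt_le_sqrt key
end
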